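/- Let G be K_{d,d−2} (d ≥ 3) together with a cycle C_d added on the bipartition class of size d. Then the number of nonempty connected vertex subsets is N(G) = (2^d − 1)(2^{d−2} − 1) + d^2 − 1. -/

import Mathlib

open SimpleGraph

/-- The number of (nonempty) vertex subsets of `G` inducing a connected subgraph. -/
noncomputable def numConnSets {V : Type*} (G : SimpleGraph V) : ℕ :=
  Nat.card {s : Finset V // (G.induce (s : Set V)).Connected}

/-- `K_{d,d-2}` together with a Hamiltonian cycle on the part of size `d`. -/
def KddMinusTwoPlusCycle (d : ℕ) : SimpleGraph (Fin d ⊕ Fin (d - 2)) :=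
  completeBipartiteGraph (Fin d) (Fin (d - 2)) ⊔
    fromRel (fun a b => ∃ a' b' : Fin d, a = Sum.inl a' ∧ b = Sum.inl b' ∧
      (cycleGraph d).Adj a' b')

/-!
Every vertex of the part of size `d - 2` is adjacent to every vertex of the cycle part, so a vertex
set meeting both parts is always connected, while a set inside one part is connected exactly when
it is connected in the graph induced on that part: the cycle `C_d` on one side, the edgeless graph
on `d - 2` vertices on the other. The connected sets of `C_d` are the whole cycle and the
`d (d - 1)` proper arcs, each determined by its first vertex and its length.
-/

open Finset Sum
open scoped Fin.NatCast Fin.CommRing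

lemma Finset.coe_disjSum {α β : Type*} (s : Finset α) (t : Finset β) :
    (s.disjSum t : Set (α ⊕ β)) = inl '' s ∪ inr '' t := by
  ext (x | x) <;> simp

lemma Finset.card_filter_nonempty {α : Type*} [Fintype α] [DecidableEq α] :
    #{s : Finset α | s.Nonempty} = 2 ^ Fintype.card α - 1 := by
  have h : ({s | s.Nonempty} : Finset (Finset α)) = univ.erase ∅ := by
    ext; simp [nonempty_iff_ne_empty]
  rw [h, card_erase_of_mem (mem_univ _), card_univ, Fintype.card_finset]

lemma subset_of_connected_induce_of_adj_mem {V : Type*} {G : SimpleGraph V} {s t : Set V}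
    (hs : (G.induce s).Connected) {v : V} (hvs : v ∈ s) (hvt : v ∈ t)
    (hadj : ∀ x ∈ s, ∀ y ∈ s, x ∈ t → G.Adj x y → y ∈ t) : s ⊆ t := by
  intro y hys
  by_contra hyt
  obtain ⟨w⟩ := hs.preconnected ⟨v, hvs⟩ ⟨y, hys⟩
  obtain ⟨e, -, hfst, hsnd⟩ :=
    w.exists_boundary_dart {x : s | ↑x ∈ t} (by exact hvt) (by exact hyt)
  exact hsnd (hadj _ e.fst.2 _ e.snd.2 hfst e.adj)

lemma induce_image_connected_iff {V W : Type*} {f : V → W} (hf : Function.Injective f)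
    (G : SimpleGraph W) (s : Set V) :
    (G.induce (f '' s)).Connected ↔ ((G.comap f).induce s).Connected :=
  (Iso.connected_iff { toEquiv := Equiv.Set.image f s hf, map_rel_iff' := Iff.rfl }).symm

lemma numConnSets_eq_card_filter {V : Type*} [Fintype V] (G : SimpleGraph V)
    [DecidablePred fun s : Finset V => (G.induce (s : Set V)).Connected] :
    numConnSets G = #{s : Finset V | (G.induce (s : Set V)).Connected} := by
  rw [numConnSets, Nat.card_eq_fintype_card, Fintype.card_subtype]

lemma numConnSets_bot {V : Type*} : numConnSets (⊥ : SimpleGraph V) = Nat.card V := by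
  have hconn (s : Finset V) : ((⊥ : SimpleGraph V).induce (s : Set V)).Connected ↔
      s ∈ Set.range ({·}) := by
    rw [induce_bot, connected_bot_iff, Set.subsingleton_coe, Set.nonempty_coe_sort, and_comm,
      ← Set.exists_eq_singleton_iff_nonempty_subsingleton]
    simp [eq_comm]
  rw [numConnSets, Nat.card_congr (Equiv.subtypeEquivRight hconn),
    Nat.card_range_of_injective singleton_injective]

section Join
variable {α β : Type*} {H : SimpleGraph (α ⊕ β)}

lemma induce_connected_of_inl_mem_of_inr_mem (hH : ∀ a b, H.Adj (inl a) (inr b))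
    {S : Set (α ⊕ β)} {a : α} {b : β} (ha : inl a ∈ S) (hb : inr b ∈ S) :
    (H.induce S).Connected := by
  have hreach (a : α) (b : β) (ha : inl a ∈ S) (hb : inr b ∈ S) :
      (H.induce S).Reachable ⟨inr b, hb⟩ ⟨inl a, ha⟩ :=
    Adj.reachable (hH a b).symm
  refine (connected_iff_exists_forall_reachable _).2 ⟨⟨inr b, hb⟩, ?_⟩
  rintro ⟨a' | b', h⟩
  · exact hreach a' b h hb
  · exact (hreach a b ha hb).trans (hreach a b' ha h).symm

lemma induce_disjSum_connected_iff (hH : ∀ a b, H.Adj (inl a) (inr b)) (s : Finset α)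
    (t : Finset β) :
    (H.induce (s.disjSum t : Set (α ⊕ β))).Connected ↔
      s.Nonempty ∧ t.Nonempty ∨
      ((H.comap inl).induce (s : Set α)).Connected ∧ t = ∅ ∨
      s = ∅ ∧ ((H.comap inr).induce (t : Set β)).Connected := by
  rcases s.eq_empty_or_nonempty with rfl | ⟨a, ha⟩ <;>
    rcases t.eq_empty_or_nonempty with rfl | ⟨b, hb⟩
  · simp [connected_iff]
  · rw [coe_disjSum, coe_empty, Set.image_empty, Set.empty_union,
      induce_image_connected_iff inr_injective]
    simp only [Finset.not_nonempty_empty, false_and, ne_empty_of_mem hb, and_false, true_and,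
      false_or]
  · rw [coe_disjSum, coe_empty, Set.image_empty, Set.union_empty,
      induce_image_connected_iff inl_injective]
    simp only [Finset.not_nonempty_empty, and_false, ne_empty_of_mem ha, false_and, and_true,
      false_or, or_false]
  · exact iff_of_true (induce_connected_of_inl_mem_of_inr_mem hH (by simpa) (by simpa))
      (Or.inl ⟨⟨a, ha⟩, ⟨b, hb⟩⟩)

theorem numConnSets_of_forall_adj_inl_inr [Fintype α] [Fintype β]
    (hH : ∀ a b, H.Adj (inl a) (inr b)) :
    numConnSets H = (2 ^ Fintype.card α - 1) * (2 ^ Fintype.card β - 1) +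
      numConnSets (H.comap inl) + numConnSets (H.comap inr) := by
  classical
  set NA : Finset (Finset α) := {s | s.Nonempty}
  set NB : Finset (Finset β) := {t | t.Nonempty}
  set CA : Finset (Finset α) := {s | ((H.comap inl).induce (s : Set α)).Connected}
  set CB : Finset (Finset β) := {t | ((H.comap inr).induce (t : Set β)).Connected}
  have hsplit : ({p | (H.induce (p.1.disjSum p.2 : Set (α ⊕ β))).Connected} :
        Finset (Finset α × Finset β)) =
      NA ×ˢ NB ∪ (CA ×ˢ {∅} ∪ {∅} ×ˢ CB) := by
    ext ⟨s, t⟩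
    simp only [mem_filter, mem_univ, true_and, mem_union, mem_product, mem_singleton,
      NA, NB, CA, CB]
    exact induce_disjSum_connected_iff hH s t
  have hdisj : Disjoint (NA ×ˢ NB) (CA ×ˢ {∅} ∪ {∅} ×ˢ CB) := by
    rw [disjoint_union_right, disjoint_product, disjoint_product]
    exact ⟨Or.inr (disjoint_singleton_right.2 (by simp [NB])),
      Or.inl (disjoint_singleton_right.2 (by simp [NA]))⟩
  have hdisj' : Disjoint (CA ×ˢ {∅}) ({∅} ×ˢ CB) :=
    disjoint_product.2 (Or.inl (disjoint_singleton_right.2 (by simp [CA, connected_iff])))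
  have hpairs : numConnSets H =
      #{p : Finset α × Finset β | (H.induce (p.1.disjSum p.2 : Set (α ⊕ β))).Connected} := by
    rw [numConnSets_eq_card_filter]
    refine card_nbij' (fun u => (u.toLeft, u.toRight)) (fun p => p.1.disjSum p.2)
      (fun u hu => ?_) (fun p hp => by simpa using hp) (fun u _ => toLeft_disjSum_toRight)
      (fun p _ => by simp)
    simp only [coe_filter, mem_univ, true_and, Set.mem_ofPred] at hu ⊢
    rwa [toLeft_disjSum_toRight]
  rw [hpairs, hsplit, card_union_of_disjoint hdisj, card_union_of_disjoint hdisj',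
    card_product, card_product, card_product, card_singleton, card_singleton, mul_one, one_mul,
    card_filter_nonempty, card_filter_nonempty, numConnSets_eq_card_filter,
    numConnSets_eq_card_filter, add_assoc]

end Join

section CycleArc
variable {n : ℕ} [NeZero n]

lemma cycleGraph_adj_iff_sub_eq_one (hn : 2 ≤ n) {u v : Fin n} :
    (cycleGraph n).Adj u v ↔ u - v = 1 ∨ v - u = 1 := by
  have hval : (1 : Fin n).val = 1 := by rw [Fin.val_one', Nat.mod_eq_of_lt hn]
  rw [cycleGraph_adj', ← hval, ← Fin.ext_iff, ← Fin.ext_iff]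

def cycleArc (i : Fin n) (k : ℕ) : Finset (Fin n) :=
  (range k).image fun j : ℕ => i + j

lemma mem_cycleArc {i x : Fin n} {k : ℕ} : x ∈ cycleArc i k ↔ ∃ j < k, i + j = x := by
  simp [cycleArc]

lemma add_mem_cycleArc {i : Fin n} {j k : ℕ} (h : j < k) : i + j ∈ cycleArc i k :=
  mem_cycleArc.2 ⟨j, h, rfl⟩

lemma self_mem_cycleArc {i : Fin n} {k : ℕ} (hk : 0 < k) : i ∈ cycleArc i k := by
  simpa using add_mem_cycleArc (i := i) hk

lemma card_cycleArc (i : Fin n) {k : ℕ} (hk : k ≤ n) : #(cycleArc i k) = k := by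
  rw [cycleArc, card_image_of_injOn, card_range]
  intro a ha b hb hab
  simp only [coe_range, Set.mem_Iio] at ha hb
  simpa [Fin.val_natCast, Nat.mod_eq_of_lt (ha.trans_le hk), Nat.mod_eq_of_lt (hb.trans_le hk)]
    using congrArg Fin.val (add_left_cancel hab)

lemma cycleArc_succ (i : Fin n) (k : ℕ) : cycleArc i (k + 1) = insert (i + k) (cycleArc i k) := by
  simp [cycleArc, range_add_one, image_insert]

lemma sub_one_notMem_cycleArc (i : Fin n) {k : ℕ} (hk : k < n) : i - 1 ∉ cycleArc i k := by
  rw [mem_cycleArc]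
  rintro ⟨j, hj, h⟩
  have hzero : ((j + 1 : ℕ) : Fin n) = 0 := by
    push_cast
    linear_combination h
  have hval := congrArg Fin.val hzero
  rw [Fin.val_natCast, Fin.val_zero, Nat.mod_eq_of_lt (by omega)] at hval
  omega

lemma eq_of_mem_cycleArc_of_sub_one_notMem {i x : Fin n} {k : ℕ} (hx : x ∈ cycleArc i k)
    (hx1 : x - 1 ∉ cycleArc i k) : x = i := by
  obtain ⟨_ | j, hj, rfl⟩ := mem_cycleArc.1 hx
  · simp
  · refine absurd (mem_cycleArc.2 ⟨j, by omega, ?_⟩) hx1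
    push_cast
    ring

lemma mem_cycleArc_of_adj {i x y : Fin n} {k : ℕ} (hxy : (cycleGraph n).Adj x y)
    (hx : x ∈ cycleArc i k) : y ∈ cycleArc i k ∨ y = i - 1 ∨ y = i + k := by
  obtain ⟨j, hj, rfl⟩ := mem_cycleArc.1 hx
  have hn : 2 ≤ n := Fin.nontrivial_iff_two_le.1 ⟨_, _, hxy.ne⟩
  rcases (cycleGraph_adj_iff_sub_eq_one hn).1 hxy with h | h
  · rcases j with _ | j
    · exact Or.inr (Or.inl (by rw [Nat.cast_zero] at h; linear_combination -h))
    · exact Or.inl (mem_cycleArc.2 ⟨j, by omega, by push_cast at h ⊢; linear_combination h⟩)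
  · rcases Nat.lt_or_ge (j + 1) k with hjk | hjk
    · exact Or.inl (mem_cycleArc.2 ⟨j + 1, hjk, by push_cast; linear_combination -h⟩)
    · obtain rfl : k = j + 1 := by omega
      exact Or.inr (Or.inr (by push_cast; linear_combination h))

lemma cycleArc_connected (i : Fin n) {k : ℕ} (hk : 0 < k) (hkn : k ≤ n) :
    ((cycleGraph n).induce (cycleArc i k : Set (Fin n))).Connected := by
  induction k with
  | zero => omega
  | succ k ih =>
    rcases k with _ | k
    · rw [show cycleArc i 1 = {i} by simp [cycleArc], coe_singleton, induce_singleton_eq_top]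
      exact connected_top
    · rw [cycleArc_succ, coe_insert, Set.insert_eq]
      refine connected_induce_union Preconnected.of_subsingleton
        (ih (by omega) (by omega)).preconnected rfl (add_mem_cycleArc (j := k) (by omega)) ?_
      rw [cycleGraph_adj_iff_sub_eq_one (by omega)]
      exact Or.inl (by push_cast; ring)

lemma Fin.exists_mem_sub_one_notMem {s : Finset (Fin n)} (hs : s.Nonempty) (hsu : s ≠ univ) :
    ∃ i ∈ s, i - 1 ∉ s := by
  by_contra! h
  obtain ⟨x, hx⟩ := hs
  have hsub : ∀ j : ℕ, x - j ∈ s := by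
    intro j
    induction j with
    | zero => simpa using hx
    | succ j ih => simpa [sub_add_eq_sub_sub] using h _ ih
  exact hsu (eq_univ_of_forall fun a => by simpa using hsub (x - a).val)

lemma eq_cycleArc_of_connected {s : Finset (Fin n)}
    (hs : ((cycleGraph n).induce (s : Set (Fin n))).Connected) (hsu : s ≠ univ) :
    ∃ i k, 0 < k ∧ k < n ∧ s = cycleArc i k := by
  -- Start at some `i ∈ s` with `i - 1 ∉ s` and stop before the first `i + k ∉ s`: no edge
  -- of the cycle leaves this arc inside `s`, so connectivity forces `s` to be the arc.
  obtain ⟨i, his, hi1⟩ :=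
    Fin.exists_mem_sub_one_notMem (coe_nonempty.1 (Set.nonempty_coe_sort.1 hs.nonempty)) hsu
  obtain ⟨a, -, ha⟩ := exists_of_ssubset (ssubset_univ_iff.2 hsu)
  have hex : ∃ j : ℕ, i + j ∉ s := ⟨(a - i).val, by simpa using ha⟩
  set k := Nat.find hex
  have hk0 : 0 < k := (Nat.find_pos hex).2 (by simpa using his)
  have hkn : k < n := (Nat.find_min' hex (by simpa using ha)).trans_lt (a - i).isLt
  have harc : cycleArc i k ⊆ s := fun x hx => by
    obtain ⟨j, hj, rfl⟩ := mem_cycleArc.1 hx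
    exact not_not.1 (Nat.find_min hex hj)
  refine ⟨i, k, hk0, hkn, Subset.antisymm ?_ harc⟩
  rw [← coe_subset]
  refine subset_of_connected_induce_of_adj_mem hs (mem_coe.2 his)
    (mem_coe.2 (self_mem_cycleArc hk0)) fun x _ y hy hx hxy => ?_
  rcases mem_cycleArc_of_adj hxy hx with h | rfl | rfl
  · exact h
  · exact absurd hy hi1
  · exact absurd hy (Nat.find_spec hex)

theorem numConnSets_cycleGraph : numConnSets (cycleGraph n) = n * (n - 1) + 1 := by
  classical
  let arc : Fin n × Fin (n - 1) → Finset (Fin n) := fun p => cycleArc p.1 (p.2 + 1)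
  have hcard : ∀ p, #(arc p) = p.2 + 1 := fun p => card_cycleArc _ (by omega)
  have hinj : Function.Injective arc := by
    rintro ⟨i, k⟩ ⟨i', k'⟩ h
    have hk := (hcard (i, k)).symm.trans ((congrArg card h).trans (hcard (i', k')))
    obtain rfl : k = k' := Fin.ext (by simpa using hk)
    change cycleArc i _ = cycleArc i' _ at h
    obtain rfl : i' = i := eq_of_mem_cycleArc_of_sub_one_notMem
      (h ▸ self_mem_cycleArc k.succ_pos) (h ▸ sub_one_notMem_cycleArc i' (by omega))
    rfl
  have huniv : univ = cycleArc (0 : Fin n) n :=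
    (eq_univ_of_card _ (by rw [card_cycleArc 0 le_rfl, Fintype.card_fin])).symm
  have hconn :
      ({s | ((cycleGraph n).induce (s : Set (Fin n))).Connected} : Finset (Finset (Fin n))) =
        insert univ (univ.image arc) := by
    ext s
    simp only [mem_filter, mem_univ, true_and, mem_insert, mem_image]
    constructor
    · intro hs
      refine or_iff_not_imp_left.2 fun hsu => ?_
      obtain ⟨i, k, hk0, hkn, rfl⟩ := eq_cycleArc_of_connected hs hsu
      exact ⟨(i, ⟨k - 1, by omega⟩), by simp only [arc]; congr; omega⟩
    · rintro (rfl | ⟨p, rfl⟩)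
      · rw [huniv]
        exact cycleArc_connected _ (NeZero.pos n) le_rfl
      · exact cycleArc_connected _ (by omega) (by omega)
  rw [numConnSets_eq_card_filter, hconn, card_insert_of_notMem, card_image_of_injective _ hinj,
    card_univ, Fintype.card_prod, Fintype.card_fin, Fintype.card_fin]
  simp only [mem_image, mem_univ, true_and, not_exists]
  intro p hp
  have := hcard p
  rw [hp, card_univ, Fintype.card_fin] at this
  omega

end CycleArc

section KddMinusTwoPlusCycle
variable {d : ℕ}

lemma kddMinusTwoPlusCycle_adj_inl_inr (a : Fin d) (b : Fin (d - 2)) :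
    (KddMinusTwoPlusCycle d).Adj (inl a) (inr b) :=
  Or.inl (by simp)

lemma comap_inl_kddMinusTwoPlusCycle : (KddMinusTwoPlusCycle d).comap inl = cycleGraph d := by
  ext a b
  simp only [KddMinusTwoPlusCycle, comap_adj, sup_adj, completeBipartiteGraph_adj, fromRel_adj]
  simpa [(cycleGraph d).adj_comm b a] using Adj.ne

lemma comap_inr_kddMinusTwoPlusCycle : (KddMinusTwoPlusCycle d).comap inr = ⊥ := by
  ext a b
  simp [KddMinusTwoPlusCycle]

end KddMinusTwoPlusCycle

theorem stmt13 (d : ℕ) (hd : 3 ≤ d) :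
    numConnSets (KddMinusTwoPlusCycle d) =
      (2 ^ d - 1) * (2 ^ (d - 2) - 1) + d ^ 2 - 1 := by
  have : NeZero d := ⟨by omega⟩
  rw [numConnSets_of_forall_adj_inl_inr kddMinusTwoPlusCycle_adj_inl_inr,
    comap_inl_kddMinusTwoPlusCycle, comap_inr_kddMinusTwoPlusCycle, numConnSets_cycleGraph,
    numConnSets_bot, Nat.card_eq_fintype_card, Fintype.card_fin, Fintype.card_fin]
  have hquad : d * (d - 1) + 1 + (d - 2) = d ^ 2 - 1 := by
    obtain ⟨m, rfl⟩ : ∃ m, d = m + 2 := ⟨d - 2, by omega⟩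
    simp only [Nat.add_sub_cancel, Nat.add_one_sub_one]
    ring_nf
    omega
  omega
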